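/- arXiv:1903.04096 — 5 statements merged into one kernel-verified Lean document; each statement's English description precedes it below -/
import Mathlib

section
/- Let n, m ∈ ℕ, let S, T ∈ {0,1}^{m×n} be binary matrices, and let R ∈ {0,1}^{n×n} be a symmetric binary matrix with R ≥ I_n. Then the sparsity-invariance property [for every Y ∈ Sparse(T) and every invertible X ∈ Sparse(R), the matrix YX⁻¹ belongs to Sparse(S)] holds if and only if T ≤ S and TR^{n−1} ≤ S (with the product and power taken structurally). -/
open Matrix

/-- Structural product of binary (Boolean) matrices:
`(sprod X Z) i j = true` iff `∃ k, X i k = true ∧ Z k j = true`. -/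
def sprod {m n p : ℕ} (X : Matrix (Fin m) (Fin n) Bool) (Z : Matrix (Fin n) (Fin p) Bool) :
    Matrix (Fin m) (Fin p) Bool :=
  Matrix.of fun i j => decide (∃ k, X i k = true ∧ Z k j = true)

/-- Structural power of a binary matrix, with `spow R 0 = I`. -/
def spow {n : ℕ} (R : Matrix (Fin n) (Fin n) Bool) : ℕ → Matrix (Fin n) (Fin n) Bool
  | 0 => Matrix.of fun i j => decide (i = j)
  | k + 1 => sprod (spow R k) R

/-- `Y` belongs to the sparsity subspace `Sparse(X)`. -/
def InSparse {m n : ℕ} (X : Matrix (Fin m) (Fin n) Bool) (Y : Matrix (Fin m) (Fin n) ℝ) : Prop :=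
  ∀ i j, X i j = false → Y i j = 0

/-- The binary matrix encoding the sparsity pattern of a real matrix. -/
noncomputable def Struct {m n : ℕ} (Y : Matrix (Fin m) (Fin n) ℝ) : Matrix (Fin m) (Fin n) Bool :=
  Matrix.of fun i j => decide (Y i j ≠ 0)

/-- Entrywise order on binary matrices: `leB X X'` means `X ≤ X'`. -/
def leB {m n : ℕ} (X X' : Matrix (Fin m) (Fin n) Bool) : Prop :=
  ∀ i j, X i j = true → X' i j = true

/-!
Sufficiency: by Cayley–Hamilton, `X⁻¹` is a polynomial in `X` of degree at most `n - 1`, and since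
`R ≥ I` every power `X ^ k` with `k ≤ n - 1` lies in `Sparse(R^{n-1})`; hence
`Y X⁻¹ ∈ Sparse(T R^{n-1}) ⊆ Sparse(S)`.

Necessity: if `(T R^{n-1})ᵢⱼ = 1`, pick `k` with `Tᵢₖ = 1` and `(R^{n-1})ₖⱼ = 1`. For the 0/1
matrix `A` of `R` and small `t > 0`, `X = 1 - t A` lies in `Sparse(R)` and its Neumann series
`X⁻¹ = ∑ tˢ Aˢ` has nonnegative entries, the `s = n - 1` term being positive at `(k, j)`. So
`Y = E_{ik}` gives `(Y X⁻¹)ᵢⱼ = (X⁻¹)ₖⱼ ≠ 0`. Finally `T ≤ T R^{n-1}` because `R ≥ I`.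
-/

open Polynomial

lemma sprod_eq_true_iff {m n p : ℕ} (X : Matrix (Fin m) (Fin n) Bool)
    (Z : Matrix (Fin n) (Fin p) Bool) (i : Fin m) (j : Fin p) :
    sprod X Z i j = true ↔ ∃ k, X i k = true ∧ Z k j = true := by
  simp [sprod]

lemma leB.trans {m n : ℕ} {X Y Z : Matrix (Fin m) (Fin n) Bool} (hXY : leB X Y) (hYZ : leB Y Z) :
    leB X Z :=
  fun i j h => hYZ i j (hXY i j h)

section Pattern

variable {n : ℕ} {R : Matrix (Fin n) (Fin n) Bool}

lemma spow_apply_self (hdiag : ∀ i, R i i = true) (k : ℕ) (i : Fin n) : spow R k i i = true := by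
  induction k with
  | zero => simp [spow]
  | succ k ih => exact (sprod_eq_true_iff _ _ _ _).mpr ⟨i, ih, hdiag i⟩

lemma leB_spow_of_le (hdiag : ∀ i, R i i = true) {k l : ℕ} (hkl : k ≤ l) :
    leB (spow R k) (spow R l) := by
  induction l, hkl using Nat.le_induction with
  | base => exact fun _ _ h => h
  | succ l _ ih => exact fun i j h => (sprod_eq_true_iff _ _ _ _).mpr ⟨j, ih i j h, hdiag j⟩

lemma leB_sprod_spow {m : ℕ} (T : Matrix (Fin m) (Fin n) Bool) (hdiag : ∀ i, R i i = true)
    (k : ℕ) : leB T (sprod T (spow R k)) :=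
  fun _ j h => (sprod_eq_true_iff _ _ _ _).mpr ⟨j, h, spow_apply_self hdiag k j⟩

end Pattern

def sparseSubmodule {m n : ℕ} (P : Matrix (Fin m) (Fin n) Bool) :
    Submodule ℝ (Matrix (Fin m) (Fin n) ℝ) where
  carrier := {Y | InSparse P Y}
  add_mem' hY hZ i j h := by simp [hY i j h, hZ i j h]
  zero_mem' _ _ _ := rfl
  smul_mem' c _ hY i j h := by simp [hY i j h]

lemma InSparse.mono {m n : ℕ} {P Q : Matrix (Fin m) (Fin n) Bool} {Y : Matrix (Fin m) (Fin n) ℝ}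
    (hY : InSparse P Y) (hPQ : leB P Q) : InSparse Q Y := by
  intro i j hQ
  apply hY
  cases hP : P i j
  · rfl
  · simp [hPQ i j hP] at hQ

lemma InSparse.mul {m n p : ℕ} {A : Matrix (Fin m) (Fin n) Bool} {B : Matrix (Fin n) (Fin p) Bool}
    {Y : Matrix (Fin m) (Fin n) ℝ} {Z : Matrix (Fin n) (Fin p) ℝ}
    (hY : InSparse A Y) (hZ : InSparse B Z) : InSparse (sprod A B) (Y * Z) := by
  intro i j hij
  rw [mul_apply]
  refine Finset.sum_eq_zero fun k _ => ?_
  cases hA : A i k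
  · rw [hY i k hA, zero_mul]
  · cases hB : B k j
    · rw [hZ k j hB, mul_zero]
    · simp only [sprod, of_apply, decide_eq_false_iff_not, not_exists, not_and] at hij
      exact absurd hB (by simp [hij k hA])

lemma InSparse.pow {n : ℕ} {R : Matrix (Fin n) (Fin n) Bool} {X : Matrix (Fin n) (Fin n) ℝ}
    (hX : InSparse R X) : ∀ k, InSparse (spow R k) (X ^ k)
  | 0 => fun i j hij => by simp_all [spow]
  | k + 1 => by rw [pow_succ]; exact (hX.pow k).mul hX

lemma inSparse_single {m n : ℕ} {T : Matrix (Fin m) (Fin n) Bool} {i : Fin m} {k : Fin n}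
    (h : T i k = true) (c : ℝ) : InSparse T (single i k c) := by
  rintro a b hab
  refine single_apply_of_ne _ _ _ _ _ ?_
  rintro ⟨rfl, rfl⟩
  simp [h] at hab

theorem Matrix.inv_eq_smul_aeval_divX_charpoly {K ι : Type*} [Field K] [Fintype ι] [DecidableEq ι]
    {X : Matrix ι ι K} (hX : IsUnit X) :
    X⁻¹ = -(X.charpoly.coeff 0)⁻¹ • aeval X X.charpoly.divX := by
  have hc : X.charpoly.coeff 0 ≠ 0 := by
    intro h
    have := X.det_eq_sign_charpoly_coeff
    rw [h, mul_zero] at this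
    exact ((isUnit_iff_isUnit_det X).mp hX).ne_zero this
  -- Cayley–Hamilton applied to `charpoly = divX charpoly * X + C (coeff 0)`
  have hCH : aeval X X.charpoly.divX * X = -(X.charpoly.coeff 0 • 1) := by
    have h := congrArg (aeval X) X.charpoly.divX_mul_X_add
    rw [aeval_self_charpoly, map_add, map_mul, aeval_X, aeval_C,
      Algebra.algebraMap_eq_smul_one] at h
    exact eq_neg_of_add_eq_zero_left h
  refine inv_eq_left_inv ?_
  rw [smul_mul_assoc, hCH, smul_neg, smul_smul, neg_mul, neg_smul, neg_neg, inv_mul_cancel₀ hc,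
    one_smul]

section Sufficiency

variable {n : ℕ} {R : Matrix (Fin n) (Fin n) Bool} {X : Matrix (Fin n) (Fin n) ℝ}

lemma aeval_mem_sparseSubmodule_spow (hdiag : ∀ i, R i i = true) (hX : InSparse R X)
    {p : ℝ[X]} {k : ℕ} (hp : p.natDegree ≤ k) : aeval X p ∈ sparseSubmodule (spow R k) := by
  rw [aeval_eq_sum_range]
  refine Submodule.sum_mem _ fun i hi => Submodule.smul_mem _ _ ?_
  exact (hX.pow i).mono (leB_spow_of_le hdiag ((Finset.mem_range_succ_iff.mp hi).trans hp))

lemma InSparse.inv (hdiag : ∀ i, R i i = true) (hXu : IsUnit X) (hX : InSparse R X) :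
    InSparse (spow R (n - 1)) X⁻¹ := by
  rw [inv_eq_smul_aeval_divX_charpoly hXu]
  refine Submodule.smul_mem (sparseSubmodule _) _ (aeval_mem_sparseSubmodule_spow hdiag hX ?_)
  rw [natDegree_divX_eq_natDegree_tsub_one, charpoly_natDegree_eq_dim, Fintype.card_fin]

end Sufficiency

section Necessity

variable {m n : ℕ}

def indicator (P : Matrix (Fin m) (Fin n) Bool) : Matrix (Fin m) (Fin n) ℝ :=
  P.map fun b => if b then 1 else 0

lemma indicator_nonneg (P : Matrix (Fin m) (Fin n) Bool) (i : Fin m) (j : Fin n) :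
    0 ≤ indicator P i j := by
  simp only [indicator, map_apply]
  split_ifs <;> norm_num

variable {R : Matrix (Fin n) (Fin n) Bool}

lemma indicator_pow_apply_pos {k : ℕ} {i j : Fin n} (h : spow R k i j = true) :
    0 < (indicator R ^ k) i j := by
  induction k generalizing j with
  | zero => simp_all [spow]
  | succ k ih =>
    obtain ⟨c, hic, hcj⟩ := (sprod_eq_true_iff _ _ _ _).mp h
    rw [pow_succ, mul_apply]
    refine Finset.sum_pos'
      (fun c _ => mul_nonneg (pow_apply_nonneg (indicator_nonneg R) k i c) (indicator_nonneg R c j))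
      ⟨c, Finset.mem_univ _, mul_pos (ih hic) (by simp [indicator, hcj])⟩

attribute [local instance] Matrix.linftyOpNormedRing Matrix.linftyOpNormedAlgebra

lemma exists_isUnit_inSparse_inv_apply_pos (hdiag : ∀ i, R i i = true) {k : ℕ} {i j : Fin n}
    (h : spow R k i j = true) : ∃ X, IsUnit X ∧ InSparse R X ∧ 0 < X⁻¹ i j := by
  set A := indicator R
  set t : ℝ := (‖A‖ + 1)⁻¹
  have ht : 0 < t := by positivity
  have hnorm : ‖t • A‖ < 1 := by
    calc ‖t • A‖ ≤ t * ‖A‖ := by simpa [Real.norm_of_nonneg ht.le] using norm_smul_le t A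
      _ < 1 := by rw [inv_mul_lt_iff₀ (by positivity)]; linarith
  have hinv : (1 - t • A)⁻¹ = ∑' s, (t • A) ^ s :=
    inv_eq_left_inv (geom_series_mul_neg _ hnorm)
  refine ⟨1 - t • A, IsUnit.of_mul_eq_one_right _ (geom_series_mul_neg _ hnorm), ?_, ?_⟩
  · intro a b hab
    have hne : a ≠ b := by rintro rfl; simp [hdiag] at hab
    simp [A, indicator, hab, one_apply_ne hne]
  · have hsum := (summable_geometric_of_norm_lt_one hnorm).hasSum
    have hentry : HasSum (fun s => ((t • A) ^ s : Matrix (Fin n) (Fin n) ℝ) i j)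
        ((∑' s, (t • A) ^ s : Matrix (Fin n) (Fin n) ℝ) i j) :=
      Pi.hasSum.mp (Pi.hasSum.mp hsum i) j
    rw [hinv]
    refine hentry.tsum_eq ▸ hentry.summable.tsum_pos (fun s => ?_) k ?_
    · simp only [_root_.smul_pow, Matrix.smul_apply, smul_eq_mul]
      exact mul_nonneg (by positivity) (pow_apply_nonneg (indicator_nonneg R) s i j)
    · simp only [_root_.smul_pow, Matrix.smul_apply, smul_eq_mul]
      exact mul_pos (by positivity) (indicator_pow_apply_pos h)

end Necessity

theorem sparsity_invariance_characterization_general {m n : ℕ}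
    (S T : Matrix (Fin m) (Fin n) Bool) (R : Matrix (Fin n) (Fin n) Bool)
    (hdiag : ∀ i, R i i = true) :
    (∀ (Y : Matrix (Fin m) (Fin n) ℝ) (X : Matrix (Fin n) (Fin n) ℝ),
        InSparse T Y → IsUnit X → InSparse R X → InSparse S (Y * X⁻¹)) ↔
      (leB T S ∧ leB (sprod T (spow R (n - 1))) S) := by
  constructor
  · intro H
    have hTR : leB (sprod T (spow R (n - 1))) S := by
      intro i j hij
      obtain ⟨k, hTik, hRkj⟩ := (sprod_eq_true_iff _ _ _ _).mp hij
      obtain ⟨X, hXu, hXR, hpos⟩ := exists_isUnit_inSparse_inv_apply_pos hdiag hRkj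
      by_contra hS
      have := H _ X (inSparse_single hTik 1) hXu hXR i j (by simpa using hS)
      rw [single_mul_apply_same, one_mul] at this
      exact hpos.ne' this
    exact ⟨(leB_sprod_spow T hdiag _).trans hTR, hTR⟩
  · rintro ⟨-, hTR⟩ Y X hY hXu hXR
    exact (hY.mul (hXR.inv hdiag hXu)).mono hTR

/-- Theorem 1, 1 ⇔ 2: sparsity invariance holds iff
`T ≤ S` and `T R^{n-1} ≤ S` (structural product/power). -/
theorem sparsity_invariance_characterization {m n : ℕ}
    (S T : Matrix (Fin m) (Fin n) Bool) (R : Matrix (Fin n) (Fin n) Bool)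
    (hsym : ∀ i j, R i j = R j i) (hdiag : ∀ i, R i i = true) :
    (∀ (Y : Matrix (Fin m) (Fin n) ℝ) (X : Matrix (Fin n) (Fin n) ℝ),
        InSparse T Y → IsUnit X → InSparse R X → InSparse S (Y * X⁻¹)) ↔
      (leB T S ∧ leB (sprod T (spow R (n - 1))) S) :=
  sparsity_invariance_characterization_general S T R hdiag
end

section
/- Let R ∈ {0,1}^{n×n} be a binary matrix with R ≥ I_n, and let X ∈ ℝ^{n×n} be an invertible matrix with X ∈ Sparse(R). Then Struct(X⁻¹) ≤ R^{n−1}, i.e., (X⁻¹)_{ij} = 0 whenever (R^{n−1})_{ij} = 0, where R^{n−1} is the (n−1)-fold structural power of R. -/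
open Matrix

lemma spow_succ_iff {n : ℕ} (R : Matrix (Fin n) (Fin n) Bool) (m : ℕ) (i k : Fin n) :
    spow R (m+1) i k = true ↔ ∃ t, spow R m i t = true ∧ R t k = true := by
  simp [spow, sprod]

lemma spow_mono {n : ℕ} (R : Matrix (Fin n) (Fin n) Bool) (hdiag : ∀ i, R i i = true)
    (m : ℕ) (i k : Fin n) (h : spow R m i k = true) : spow R (m+1) i k = true := by
  rw [spow_succ_iff]; exact ⟨k, h, hdiag k⟩

lemma spow_diag {n : ℕ} (R : Matrix (Fin n) (Fin n) Bool) (hdiag : ∀ i, R i i = true)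
    (m : ℕ) (i : Fin n) : spow R m i i = true := by
  induction m with
  | zero => simp [spow]
  | succ m ih => exact spow_mono R hdiag m i i ih

/-- support submodule -/
def suppSubmodule {n : ℕ} (S : Set (Fin n)) : Submodule ℝ (Fin n → ℝ) where
  carrier := {v | ∀ l ∉ S, v l = 0}
  add_mem' := fun ha hb l hl => by simp [ha l hl, hb l hl]
  zero_mem' := fun l hl => rfl
  smul_mem' := fun c v hv l hl => by simp [hv l hl]

lemma inv_entry_zero {n : ℕ} (X : Matrix (Fin n) (Fin n) ℝ) (hX : IsUnit X)
    (S : Set (Fin n)) (hclosed : ∀ k l, k ∈ S → l ∉ S → X k l = 0)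
    (i j : Fin n) (hi : i ∈ S) (hj : j ∉ S) : X⁻¹ i j = 0 := by
  have hdet : IsUnit X.det := (Matrix.isUnit_iff_isUnit_det X).mp hX
  have hdetT : IsUnit Xᵀ.det := by rwa [Matrix.det_transpose]
  set V := suppSubmodule S with hV
  set f : (Fin n → ℝ) →ₗ[ℝ] (Fin n → ℝ) := Xᵀ.mulVecLin with hf
  have hcancel : ∀ a : Fin n → ℝ, (Xᵀ)⁻¹ *ᵥ (Xᵀ *ᵥ a) = a := by
    intro a
    rw [Matrix.mulVec_mulVec, Matrix.nonsing_inv_mul _ hdetT, Matrix.one_mulVec]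
  have hinj : Function.Injective f := by
    intro a b hab
    have h2 := congrArg (fun v => (Xᵀ)⁻¹ *ᵥ v) hab
    simp only [hf, Matrix.mulVecLin_apply] at h2
    rwa [hcancel, hcancel] at h2
  have hle : V.map f ≤ V := by
    rintro _ ⟨v, hv, rfl⟩
    intro l hl
    show (Xᵀ *ᵥ v) l = 0
    unfold Matrix.mulVec dotProduct
    apply Finset.sum_eq_zero
    intro k _
    show Xᵀ l k * v k = 0
    by_cases hk : k ∈ S
    · rw [Matrix.transpose_apply, hclosed k l hk hl, zero_mul]
    · rw [hv k hk, mul_zero]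
  have heq : V.map f = V := by
    apply Submodule.eq_of_le_of_finrank_le hle
    exact le_of_eq (Submodule.equivMapOfInjective f hinj V).finrank_eq
  have hu : (Pi.single i (1:ℝ)) ∈ V := by
    intro l hl
    exact Pi.single_eq_of_ne (fun h => hl (by rw [h]; exact hi)) 1
  rw [← heq] at hu
  obtain ⟨w, hwV, hw⟩ := hu
  have hwz : w = (Xᵀ)⁻¹ *ᵥ Pi.single i 1 := by
    rw [← hw, hf, Matrix.mulVecLin_apply, hcancel]
  have hwj := hwV j hj
  rw [hwz, ← Matrix.transpose_nonsing_inv] at hwj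
  simpa [Matrix.mulVec, dotProduct, Pi.single_apply] using hwj

/-- Lemma A1, part 1: if `R ≥ Iₙ` and `X ∈ Sparse(R)` is
invertible, then `Struct(X⁻¹) ≤ R^{n-1}`, i.e. `(X⁻¹)_{ij} = 0` whenever
`(R^{n-1})_{ij} = 0`. -/
theorem struct_inverse_le_structural_power {n : ℕ}
    (R : Matrix (Fin n) (Fin n) Bool) (hdiag : ∀ i, R i i = true)
    (X : Matrix (Fin n) (Fin n) ℝ) (hX : IsUnit X) (hXs : InSparse R X) :
    leB (Struct X⁻¹) (spow R (n - 1)) := by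
  intro i j hij
  by_contra hsp
  have hsp' : spow R (n-1) i j = false := by
    cases h : spow R (n-1) i j with
    | false => rfl
    | true => exact absurd h hsp
  have hne : X⁻¹ i j ≠ 0 := by
    simpa [Struct] using hij
  apply hne
  -- n ≥ 1 since i : Fin n exists
  obtain ⟨m, rfl⟩ : ∃ m, n = m + 1 := ⟨n - 1, (Nat.succ_pred_eq_of_pos (Nat.pos_of_ne_zero
    (fun h => (h ▸ i).elim0))).symm⟩
  simp only [Nat.add_sub_cancel] at hsp' ⊢
  set T : ℕ → Finset (Fin (m+1)) :=
    fun a => Finset.univ.filter (fun k => spow R a i k = true) with hT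
  have hmemT : ∀ a k, k ∈ T a ↔ spow R a i k = true := by
    intro a k; simp [hT]
  have hmono : ∀ a, T a ⊆ T (a+1) := by
    intro a k hk
    rw [hmemT] at hk ⊢
    exact spow_mono R hdiag a i k hk
  have hstep : ∀ a b, T a = T b → T (a+1) = T (b+1) := by
    intro a b h
    ext k
    rw [hmemT, hmemT, spow_succ_iff, spow_succ_iff]
    constructor
    · rintro ⟨t, ht, hr⟩
      have : t ∈ T b := h ▸ (hmemT a t).mpr ht
      exact ⟨t, (hmemT b t).mp this, hr⟩
    · rintro ⟨t, ht, hr⟩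
      have : t ∈ T a := h.symm ▸ (hmemT b t).mpr ht
      exact ⟨t, (hmemT a t).mp this, hr⟩
  have hprop : ∀ a, T a = T (a+1) → ∀ b, a ≤ b → T b = T (b+1) := by
    intro a ha b hb
    induction b, hb using Nat.le_induction with
    | base => exact ha
    | succ b hb ih => exact hstep _ _ ih
  have hi0 : i ∈ T 0 := by rw [hmemT]; simp [spow]
  have hfix : T m = T (m+1) := by
    by_contra hne'
    have hcard : ∀ c, c ≤ m + 1 → c + 1 ≤ (T c).card := by
      intro c hc
      induction c with
      | zero => exact Finset.card_pos.mpr ⟨i, hi0⟩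
      | succ c ih =>
        have hlt : T c ⊂ T (c+1) := by
          refine Finset.ssubset_iff_of_subset (hmono c) |>.mpr ?_
          by_contra hno
          push_neg at hno
          have : T c = T (c+1) := Finset.Subset.antisymm (hmono c)
            (fun k hk => hno k hk)
          exact hne' (hprop c this m (by omega))
        calc c + 1 + 1 ≤ (T c).card + 1 := by
              have := ih (by omega); omega
          _ ≤ (T (c+1)).card := Finset.card_lt_card hlt
    have h1 := hcard (m+1) le_rfl
    have h2 : (T (m+1)).card ≤ m + 1 := by
      simpa using Finset.card_le_univ (T (m+1))
    omega
  set S : Set (Fin (m+1)) := {k | spow R m i k = true} with hS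
  have hclosed : ∀ k l, k ∈ S → l ∉ S → X k l = 0 := by
    intro k l hk hl
    have hRkl : R k l = false := by
      cases h : R k l with
      | false => rfl
      | true =>
        exfalso
        apply hl
        have : l ∈ T (m+1) := by
          rw [hmemT, spow_succ_iff]
          exact ⟨k, hk, h⟩
        rw [← hfix, hmemT] at this
        exact this
    exact hXs k l hRkl
  exact inv_entry_zero X hX S hclosed i j (spow_diag R hdiag m i) (fun h => by
    rw [hS] at h; simp only [Set.mem_setOf_eq] at h; rw [h] at hsp'; exact Bool.noConfusion hsp')
end

section
/- Let T ∈ {0,1}^{m×n} and R ∈ {0,1}^{n×n} be binary matrices, and let W ∈ ℝ^{n×n} be a matrix with Struct(W) = R (i.e., W_{ij} ≠ 0 exactly when R_{ij} = 1). Then there exists Z ∈ Sparse(T) such that Struct(ZW) = TR, where TR is the structural product of T and R. -/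
open Matrix

/-- Lemma A2: given binary `T`, `R` and a real matrix `W`
with `Struct(W) = R`, there exists `Z ∈ Sparse(T)` with `Struct(ZW) = TR`
(structural product). -/
theorem exists_sparse_factor_achieving_structural_product {m n : ℕ}
    (T : Matrix (Fin m) (Fin n) Bool) (R : Matrix (Fin n) (Fin n) Bool)
    (W : Matrix (Fin n) (Fin n) ℝ) (hW : Struct W = R) :
    ∃ Z : Matrix (Fin m) (Fin n) ℝ, InSparse T Z ∧ Struct (Z * W) = sprod T R := by
  classical
  have hRW : ∀ (k j : Fin n), R k j = true ↔ W k j ≠ 0 := by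
    intro k j
    rw [← hW]
    simp [Struct]
  set P : Fin m → Fin n → Polynomial ℝ := fun i j =>
    ∑ k, Polynomial.C (if T i k then W k j else 0) * Polynomial.X ^ (k : ℕ) with hP
  have hcoeff : ∀ i j (k : Fin n), (P i j).coeff k = if T i k then W k j else 0 := by
    intro i j k
    rw [hP]
    simp only [Polynomial.finset_sum_coeff, Polynomial.coeff_C_mul, Polynomial.coeff_X_pow]
    rw [Finset.sum_eq_single k]
    · simp
    · intro b _ hb
      have : (k : ℕ) ≠ (b : ℕ) := fun h => hb (Fin.ext h).symm
      simp [this]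
    · simp
  have hne : ∀ i j, (∃ k, T i k = true ∧ W k j ≠ 0) → P i j ≠ 0 := by
    rintro i j ⟨k, hk, hw⟩ h0
    have := hcoeff i j k
    rw [h0] at this
    simp [hk] at this
    exact hw this.symm
  have hzero : ∀ i j, (¬ ∃ k, T i k = true ∧ W k j ≠ 0) → P i j = 0 := by
    intro i j h
    push_neg at h
    rw [hP]
    apply Finset.sum_eq_zero
    intro k _
    by_cases hk : T i k = true
    · simp [hk, h k hk]
    · simp [hk]
  have hfin : (⋃ i, ⋃ j, {t : ℝ | P i j ≠ 0 ∧ (P i j).IsRoot t}).Finite := by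
    apply Set.finite_iUnion
    intro i
    apply Set.finite_iUnion
    intro j
    by_cases h : P i j = 0
    · simp [h]
    · exact (Polynomial.finite_setOf_isRoot h).subset (fun t ht => ht.2)
  obtain ⟨t, ht⟩ := hfin.infinite_compl.nonempty
  have ht' : ∀ i j, P i j ≠ 0 → ¬ (P i j).IsRoot t := by
    intro i j hp hr
    exact ht (Set.mem_iUnion.2 ⟨i, Set.mem_iUnion.2 ⟨j, hp, hr⟩⟩)
  refine ⟨Matrix.of fun i k => if T i k then t ^ (k : ℕ) else 0, ?_, ?_⟩
  · intro i k hk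
    simp [hk]
  · have heval : ∀ i j, (Matrix.of (fun i k => if T i k then t ^ (k : ℕ) else 0) * W) i j
        = (P i j).eval t := by
      intro i j
      rw [hP]
      simp only [Matrix.mul_apply, Polynomial.eval_finset_sum, Polynomial.eval_mul,
        Polynomial.eval_C, Polynomial.eval_pow, Polynomial.eval_X, Matrix.of_apply]
      apply Finset.sum_congr rfl
      intro k _
      by_cases hk : T i k = true <;> simp [hk] <;> ring
    ext i j
    simp only [Struct, sprod, Matrix.of_apply, decide_eq_decide, heval]
    constructor
    · intro h
      by_contra hc
      have hc' : ¬ ∃ k, T i k = true ∧ W k j ≠ 0 := by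
        intro ⟨k, h1, h2⟩
        exact hc ⟨k, h1, (hRW k j).2 h2⟩
      rw [hzero i j hc'] at h
      simp at h
    · intro ⟨k, h1, h2⟩
      have hex : ∃ k, T i k = true ∧ W k j ≠ 0 := ⟨k, h1, (hRW k j).1 h2⟩
      exact ht' i j (hne i j hex)
end

section
/- Let T ∈ {0,1}^{m×n} be a binary matrix, and define R_T ∈ {0,1}^{n×n} by (R_T)_{jk} = 0 if there exists i with T_{ik} = 0 and T_{ij} = 1, and (R_T)_{jk} = 1 otherwise; define R*_T ∈ {0,1}^{n×n} by (R*_T)_{jk} = 1 iff (R_T)_{jk} = (R_T)_{kj} = 1. Then for every symmetric binary matrix R ∈ {0,1}^{n×n} with R ≥ I_n, R = R^{n−1} (structural power), and TR^{n−1} ≤ T (structural product), the number of connected components of the graph G(R*_T) is at most the number of connected components of G(R); moreover, if R ≠ R*_T then G(R) has strictly more connected components than G(R*_T). -/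
open Matrix

/-- The undirected graph `G(R)` on `n` vertices whose adjacency matrix is the
symmetric binary matrix `R` (self-loops are irrelevant for connectivity). -/
def graphOf {n : ℕ} (R : Matrix (Fin n) (Fin n) Bool) : SimpleGraph (Fin n) :=
  SimpleGraph.fromRel (fun i j => R i j = true)

/-!
The hypothesis `T R^{n-1} ≤ T` with `R = R^{n-1}` says that `R_{jk} = 1` forces the support of
column `j` of `T` into that of column `k`; by symmetry of `R` the two columns then agree, so
`R ≤ R*_T` and every component of `G(R*_T)` is a union of components of `G(R)`.
Since `R ≥ Iₙ` and paths have length at most `n - 1`, `R = R^{n-1}` is exactly reachability in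
`G(R)`; hence an entry where `R*_T` exceeds `R` joins two different components of `G(R)`.
-/

open SimpleGraph

section BoolMatrix

variable {n : ℕ}

@[simp]
lemma sprod_apply {m p : ℕ} (X : Matrix (Fin m) (Fin n) Bool) (Z : Matrix (Fin n) (Fin p) Bool)
    (i : Fin m) (j : Fin p) : sprod X Z i j = true ↔ ∃ k, X i k = true ∧ Z k j = true := by
  simp [sprod]

lemma sprod_assoc {a b c d : ℕ} (X : Matrix (Fin a) (Fin b) Bool)
    (Y : Matrix (Fin b) (Fin c) Bool) (Z : Matrix (Fin c) (Fin d) Bool) :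
    sprod (sprod X Y) Z = sprod X (sprod Y Z) := by
  ext i j
  rw [Bool.eq_iff_iff]
  simp only [sprod_apply]
  constructor
  · rintro ⟨k, ⟨l, hil, hlk⟩, hkj⟩
    exact ⟨l, hil, k, hlk, hkj⟩
  · rintro ⟨l, hil, k, hlk, hkj⟩
    exact ⟨k, ⟨l, hil, hlk⟩, hkj⟩

lemma spow_succ' (R : Matrix (Fin n) (Fin n) Bool) (a : ℕ) :
    spow R (a + 1) = sprod R (spow R a) := by
  induction a with
  | zero =>
    ext i j
    simp [spow, sprod]
  | succ a ih =>
    change sprod (spow R (a + 1)) R = sprod R (sprod (spow R a) R)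
    rw [ih, sprod_assoc]

lemma leB_spow_of_le_s11 {R : Matrix (Fin n) (Fin n) Bool} (hrefl : ∀ i, R i i = true)
    {a b : ℕ} (hab : a ≤ b) : leB (spow R a) (spow R b) := by
  induction b, hab using Nat.le_induction with
  | base => exact fun _ _ h => h
  | succ b _ ih =>
    intro j k hjk
    exact (sprod_apply _ _ _ _).2 ⟨k, ih j k hjk, hrefl k⟩

lemma exists_eq_false_eq_true_of_leB_of_ne {m : ℕ} {X Y : Matrix (Fin m) (Fin n) Bool}
    (hXY : leB X Y) (hne : X ≠ Y) : ∃ i j, X i j = false ∧ Y i j = true := by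
  by_contra! h
  refine hne (Matrix.ext fun i j => ?_)
  cases hX : X i j
  · cases hY : Y i j
    · rfl
    · exact absurd hY (h i j hX)
  · exact (hXY i j hX).symm

end BoolMatrix

section Graph

variable {n : ℕ} {R : Matrix (Fin n) (Fin n) Bool}

lemma graphOf_mono {S : Matrix (Fin n) (Fin n) Bool} (h : leB R S) : graphOf R ≤ graphOf S := by
  intro j k hjk
  rw [graphOf, fromRel_adj] at hjk ⊢
  exact ⟨hjk.1, hjk.2.imp (h j k) (h k j)⟩

lemma reachable_graphOf_of_eq_true {j k : Fin n} (h : R j k = true) :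
    (graphOf R).Reachable j k := by
  by_cases hjk : j = k
  · exact hjk ▸ Reachable.refl j
  · exact Adj.reachable (by rw [graphOf, fromRel_adj]; exact ⟨hjk, Or.inl h⟩)

lemma eq_true_of_adj_graphOf (hsym : ∀ i j, R i j = R j i) {j k : Fin n}
    (h : (graphOf R).Adj j k) : R j k = true := by
  rw [graphOf, fromRel_adj] at h
  exact h.2.elim id fun h' => hsym j k ▸ h'

lemma spow_length_eq_true_of_walk (hsym : ∀ i j, R i j = R j i) {j k : Fin n}
    (p : (graphOf R).Walk j k) : spow R p.length j k = true := by
  induction p with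
  | nil => simp [spow]
  | cons h _ ih =>
    rw [Walk.length_cons, spow_succ']
    exact (sprod_apply _ _ _ _).2 ⟨_, eq_true_of_adj_graphOf hsym h, ih⟩

lemma eq_true_of_reachable_graphOf (hsym : ∀ i j, R i j = R j i) (hrefl : ∀ i, R i i = true)
    (hpow : R = spow R (n - 1)) {j k : Fin n} (h : (graphOf R).Reachable j k) :
    R j k = true := by
  obtain ⟨p⟩ := h
  have hlen : p.bypass.length ≤ n - 1 := by
    have := (Walk.bypass_isPath p).length_lt
    rw [Fintype.card_fin] at this
    omega
  rw [hpow]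
  exact leB_spow_of_le_s11 hrefl hlen j k (spow_length_eq_true_of_walk hsym p.bypass)

end Graph

lemma SimpleGraph.ConnectedComponent.card_lt_card_of_le {V : Type*} [Finite V]
    {G G' : SimpleGraph V} (h : G ≤ G') {u v : V} (hG' : G'.Reachable u v)
    (hG : ¬ G.Reachable u v) :
    Nat.card G'.ConnectedComponent < Nat.card G.ConnectedComponent := by
  have := Fintype.ofFinite G.ConnectedComponent
  have := Fintype.ofFinite G'.ConnectedComponent
  rw [Nat.card_eq_fintype_card, Nat.card_eq_fintype_card]
  refine Fintype.card_lt_of_surjective_not_injective _ (surjective_map_ofLE h) fun hinj => hG ?_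
  exact ConnectedComponent.eq.1 (hinj (ConnectedComponent.sound hG'))

lemma leB_of_sprod_le {m n : ℕ} {T : Matrix (Fin m) (Fin n) Bool}
    {RT Rstar R : Matrix (Fin n) (Fin n) Bool}
    (hRT : ∀ j k, RT j k = false ↔ ∃ i, T i k = false ∧ T i j = true)
    (hRstar : ∀ j k, Rstar j k = true ↔ (RT j k = true ∧ RT k j = true))
    (hsym : ∀ i j, R i j = R j i) (hle : leB (sprod T R) T) : leB R Rstar := by
  have hRT_true : ∀ j k, R j k = true → RT j k = true := fun j k hjk => by
    by_contra hf
    obtain ⟨i, hik, hij⟩ := (hRT j k).1 (Bool.of_not_eq_true hf)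
    simp [hle i k ((sprod_apply _ _ _ _).2 ⟨j, hij, hjk⟩)] at hik
  exact fun j k hjk => (hRstar j k).2 ⟨hRT_true j k hjk, hRT_true k j (hsym j k ▸ hjk)⟩

/-- Proposition 1, 1 ⇔ 2: among all symmetric binary
matrices `R ≥ Iₙ` with `R = R^{n-1}` and `T R^{n-1} ≤ T`, the matrix `R*_T`
produced by the two-step procedure minimizes the number of connected
components of `G(·)`, strictly so unless `R = R*_T`. -/
theorem optimized_sparsity_minimizes_components {m n : ℕ}
    (T : Matrix (Fin m) (Fin n) Bool)
    (RT Rstar : Matrix (Fin n) (Fin n) Bool)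
    (hRT : ∀ j k, RT j k = false ↔ ∃ i, T i k = false ∧ T i j = true)
    (hRstar : ∀ j k, Rstar j k = true ↔ (RT j k = true ∧ RT k j = true)) :
    ∀ R : Matrix (Fin n) (Fin n) Bool,
      (∀ i j, R i j = R j i) → (∀ i, R i i = true) →
      R = spow R (n - 1) →
      leB (sprod T (spow R (n - 1))) T →
      Nat.card ((graphOf Rstar).ConnectedComponent) ≤
        Nat.card ((graphOf R).ConnectedComponent) ∧
      (R ≠ Rstar →
        Nat.card ((graphOf Rstar).ConnectedComponent) <
          Nat.card ((graphOf R).ConnectedComponent)) := by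
  intro R hsym hrefl hpow hle
  rw [← hpow] at hle
  have hRle : leB R Rstar := leB_of_sprod_le hRT hRstar hsym hle
  have hgraph := graphOf_mono hRle
  refine ⟨ConnectedComponent.card_le_card_of_le hgraph, fun hne => ?_⟩
  obtain ⟨j, k, hR, hS⟩ := exists_eq_false_eq_true_of_leB_of_ne hRle hne
  refine ConnectedComponent.card_lt_card_of_le hgraph (reachable_graphOf_of_eq_true hS) ?_
  intro hreach
  simp [eq_true_of_reachable_graphOf hsym hrefl hpow hreach] at hR
end

section
/- Let R ∈ {0,1}^{n×n} be a symmetric binary matrix with R ≥ I_n, and let X ∈ ℝ^{n×n} be an invertible matrix with X ∈ Sparse(R^{n−1}), where R^{n−1} is the (n−1)-fold structural power of R. Then X⁻¹ ∈ Sparse(R^{n−1}); that is, the set of invertible matrices with sparsity pattern R^{n−1} is closed under matrix inversion. -/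
/-!
With `R ≥ I`, walks in the graph of `R` can be padded to any longer length, and a shortest walk
has fewer than `n` edges, so `R^{n-1}` is exactly the reachability relation of that graph.
Reachability is a preorder, so the matrices supported on it form a subalgebra of the
finite-dimensional algebra of `n × n` real matrices. That subalgebra is Artinian, so an element
that is invertible in the big algebra is a non-zero-divisor in it and hence a unit there:
its inverse stays supported on `R^{n-1}`.
-/

open Matrix

namespace Matrix

variable {ι K : Type*} [Fintype ι] [DecidableEq ι] [CommSemiring K]

variable (K) in
def supportedSubalgebra (r : ι → ι → Prop) (hr : ∀ i, r i i)
    (ht : ∀ i j k, r i j → r j k → r i k) :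
    Subalgebra K (Matrix ι ι K) where
  carrier := {Y | ∀ i j, ¬ r i j → Y i j = 0}
  mul_mem' {Y Z} hY hZ i j hij := by
    rw [mul_apply]
    refine Finset.sum_eq_zero fun k _ => ?_
    by_cases hik : r i k
    · rw [hZ k j fun hkj => hij (ht i k j hik hkj), mul_zero]
    · rw [hY i k hik, zero_mul]
  add_mem' hY hZ i j hij := by rw [add_apply, hY i j hij, hZ i j hij, add_zero]
  algebraMap_mem' c i j hij := by
    rw [algebraMap_matrix_apply, if_neg]
    rintro rfl
    exact hij (hr i)

theorem mem_supportedSubalgebra {r : ι → ι → Prop} {hr : ∀ i, r i i}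
    {ht : ∀ i j k, r i j → r j k → r i k}
    {Y : Matrix ι ι K} : Y ∈ supportedSubalgebra K r hr ht ↔ ∀ i j, ¬ r i j → Y i j = 0 :=
  Iff.rfl

end Matrix

open nonZeroDivisors in
theorem Subalgebra.ringInverse_mem {K A : Type*} [Field K] [Ring A] [Algebra K A]
    [FiniteDimensional K A] (S : Subalgebra K A) {x : A} (hx : x ∈ S) : Ring.inverse x ∈ S := by
  by_cases hu : IsUnit x
  · have : IsArtinianRing S := isArtinian_of_tower K inferInstance
    have hreg : (⟨x, hx⟩ : S) ∈ S⁰ :=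
      mem_nonZeroDivisors_of_injective (f := S.val) Subtype.val_injective hu.mem_nonZeroDivisors
    obtain ⟨u, hux⟩ := IsArtinianRing.isUnit_of_mem_nonZeroDivisors hreg
    have hxu : x = ((Units.map S.val.toMonoidHom u : Aˣ) : A) := by simp [hux]
    rw [hxu, Ring.inverse_unit, ← map_inv]
    exact (u⁻¹ : Sˣ).val.2
  · rw [Ring.inverse_non_unit x hu]
    exact S.zero_mem

section StructuralPower

variable {n : ℕ} (R : Matrix (Fin n) (Fin n) Bool)

theorem spow_succ_eq_true_iff {k : ℕ} {i j : Fin n} :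
    spow R (k + 1) i j = true ↔ ∃ m, spow R k i m = true ∧ R m j = true := by
  simp [spow, sprod]

theorem spow_zero_eq_true_iff {i j : Fin n} : spow R 0 i j = true ↔ i = j := by
  simp [spow]

theorem spow_eq_true_of_le (hdiag : ∀ i, R i i = true) {k l : ℕ} (hkl : k ≤ l) {i j : Fin n}
    (h : spow R k i j = true) : spow R l i j = true := by
  induction l, hkl using Nat.le_induction with
  | base => exact h
  | succ l _ ih => exact (spow_succ_eq_true_iff R).2 ⟨j, ih, hdiag j⟩

theorem spow_walk_length_eq_true (hsym : ∀ i j, R i j = R j i) {i j : Fin n}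
    (p : (SimpleGraph.fromRel fun a b => R a b = true).Walk i j) :
    spow R p.length i j = true := by
  induction p using SimpleGraph.Walk.concatRec with
  | Hnil => exact (spow_zero_eq_true_iff R).2 rfl
  | Hconcat p h ih =>
    rw [SimpleGraph.Walk.length_concat, spow_succ_eq_true_iff]
    obtain ⟨-, h | h⟩ := (SimpleGraph.fromRel_adj _ _ _).1 h
    · exact ⟨_, ih, h⟩
    · exact ⟨_, ih, hsym _ _ ▸ h⟩

theorem reachable_of_spow_eq_true {k : ℕ} {i j : Fin n} (h : spow R k i j = true) :
    (SimpleGraph.fromRel fun a b => R a b = true).Reachable i j := by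
  induction k generalizing j with
  | zero => exact (spow_zero_eq_true_iff R).1 h ▸ .refl i
  | succ k ih =>
    obtain ⟨m, hm, hR⟩ := (spow_succ_eq_true_iff R).1 h
    by_cases hmj : m = j
    · exact hmj ▸ ih hm
    · exact (ih hm).trans ((SimpleGraph.fromRel_adj _ _ _).2 ⟨hmj, .inl hR⟩).reachable

theorem spow_sub_one_eq_true_iff_reachable (hsym : ∀ i j, R i j = R j i)
    (hdiag : ∀ i, R i i = true) {i j : Fin n} :
    spow R (n - 1) i j = true ↔ (SimpleGraph.fromRel fun a b => R a b = true).Reachable i j := by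
  refine ⟨reachable_of_spow_eq_true R, fun ⟨p⟩ => ?_⟩
  have hlen : p.toPath.1.length ≤ n - 1 :=
    Nat.le_sub_one_of_lt (by simpa using p.toPath.2.length_lt)
  exact spow_eq_true_of_le R hdiag hlen (spow_walk_length_eq_true R hsym p.toPath.1)

end StructuralPower

theorem inverse_preserves_closure_sparsity_general {n : ℕ}
    (R : Matrix (Fin n) (Fin n) Bool)
    (hsym : ∀ i j, R i j = R j i) (hdiag : ∀ i, R i i = true)
    (X : Matrix (Fin n) (Fin n) ℝ)
    (hXs : InSparse (spow R (n - 1)) X) :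
    InSparse (spow R (n - 1)) X⁻¹ := by
  set G := SimpleGraph.fromRel fun a b => R a b = true
  have hpattern : ∀ i j, spow R (n - 1) i j = false ↔ ¬ G.Reachable i j := fun i j => by
    rw [← spow_sub_one_eq_true_iff_reachable R hsym hdiag, Bool.not_eq_true]
  let S := supportedSubalgebra ℝ G.Reachable (fun _ => .refl _) (fun _ _ _ => .trans)
  have hX : X ∈ S := mem_supportedSubalgebra.2 fun i j h => hXs i j ((hpattern i j).2 h)
  have hXinv : X⁻¹ ∈ S := nonsing_inv_eq_ringInverse X ▸ S.ringInverse_mem hX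
  exact fun i j h => mem_supportedSubalgebra.1 hXinv i j ((hpattern i j).1 h)

/-- for symmetric binary `R ≥ Iₙ`, the set of invertible
matrices with sparsity pattern `R^{n-1}` is closed under inversion: if `X` is
invertible and `X ∈ Sparse(R^{n-1})`, then `X⁻¹ ∈ Sparse(R^{n-1})`. -/
theorem inverse_preserves_closure_sparsity {n : ℕ}
    (R : Matrix (Fin n) (Fin n) Bool)
    (hsym : ∀ i j, R i j = R j i) (hdiag : ∀ i, R i i = true)
    (X : Matrix (Fin n) (Fin n) ℝ) (hX : IsUnit X)
    (hXs : InSparse (spow R (n - 1)) X) :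
    InSparse (spow R (n - 1)) X⁻¹ :=
  inverse_preserves_closure_sparsity_general R hsym hdiag X hXs
end
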